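/- arXiv:2004.07749 — 3 statements merged into one kernel-verified Lean document; each statement's English description precedes it below -/
import Mathlib

section
/- Let R(V;W) be a total functional relation from V to W with respect to a model M, and let diff(Z) be defined by diff(Z) ← d, F(X;Y), R(V;W) where W is disjoint from the free variables of c, F, and the context, and D ⊨ ∀(c → d). Then M ⊨ ∀(c ∧ F(X;Y) → ∃W. R(V;W) ∧ diff(Z)). -/
/-- Lemma 3 (key lemma for the differential replacement rule), in valuation
semantics. `Var` is the set of variables, `U` the universe of the model;
formulas are predicates on valuations. `W` is the tuple of output variables of
`R(V;W)`. -/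
theorem differential_replacement
    {Var U : Type*} (W : Set Var)
    (c d F R diffP : (Var → U) → Prop)
    -- R(V;W) is total from V to W: any valuation can be modified on W so as to satisfy R
    (hTotal : ∀ σ : Var → U, ∃ σ', (∀ v ∉ W, σ' v = σ v) ∧ R σ')
    -- R(V;W) is functional from V to W
    (hFunc : ∀ σ σ' : Var → U, R σ → R σ' → (∀ v ∉ W, σ v = σ' v) → ∀ v, σ v = σ' v)
    -- W is disjoint from the variables of c, d and F(X;Y)
    (hcW : ∀ σ σ' : Var → U, (∀ v ∉ W, σ v = σ' v) → (c σ ↔ c σ'))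
    (hdW : ∀ σ σ' : Var → U, (∀ v ∉ W, σ v = σ' v) → (d σ ↔ d σ'))
    (hFW : ∀ σ σ' : Var → U, (∀ v ∉ W, σ v = σ' v) → (F σ ↔ F σ'))
    -- the definition clause diff(Z) ← d, F(X;Y), R(V;W) holds in M
    (hdiff : ∀ σ : Var → U, d σ → F σ → R σ → diffP σ)
    -- D ⊨ ∀ (c → d)
    (hcd : ∀ σ : Var → U, c σ → d σ) :
    ∀ σ : Var → U, c σ → F σ → ∃ σ', (∀ v ∉ W, σ' v = σ v) ∧ R σ' ∧ diffP σ' := by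
  intro σ hc hF
  obtain ⟨σ', hW, hR⟩ := hTotal σ
  have hc' : c σ' := (hcW σ σ' (fun v hv => (hW v hv).symm)).mp hc
  have hF' : F σ' := (hFW σ σ' (fun v hv => (hW v hv).symm)).mp hF
  exact ⟨σ', hW, hR, hdiff σ' (hcd σ' hc') hF' hR⟩
end

section
/- If F(X;Y) is a total functional conjunction w.r.t. a model M and the variables Y do not occur elsewhere in a clause H ← c, G_L, F(X;Y), G_R, then M ⊨ ∀(∃Y. c ∧ G_L ∧ F(X;Y) ∧ G_R ↔ c ∧ G_L ∧ G_R) (where Y does not occur free in c, G_L, G_R, H). -/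
/-- Justification of the Totality rule R6: a total functional call whose output
variables `Y` do not occur elsewhere in the clause may be deleted. Here `c`,
`Gl`, `Gr` depend only on the other variables `x : α`, and `F x y` is the
conjunction `F(X;Y)`. -/
theorem totality_rule {α β : Type*} (F : α → β → Prop) (c Gl Gr : α → Prop)
    (hFunc : ∀ x y z, F x y → F x z → y = z)
    (hTotal : ∀ x, ∃ y, F x y) :
    ∀ x, (∃ y, c x ∧ Gl x ∧ F x y ∧ Gr x) ↔ (c x ∧ Gl x ∧ Gr x) := by
  intro x
  constructor
  · rintro ⟨y, hc, hl, _, hr⟩; exact ⟨hc, hl, hr⟩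
  · rintro ⟨hc, hl, hr⟩
    obtain ⟨y, hy⟩ := hTotal x
    exact ⟨y, hc, hl, hy, hr⟩
end

section
/- Concatenation preserves totality and functionality of conjunctions: if A₁(X₁;Y₁),...,Aₙ(Xₙ;Yₙ) are total functional atoms w.r.t. a model M, X = (⋃Xᵢ) \ (⋃Yᵢ), Y = ⋃Yᵢ, and for each i the variables Yᵢ are disjoint from X₁∪...∪Xᵢ and Y₁∪...∪Y_{i-1}, then the conjunction F = A₁ ∧ ... ∧ Aₙ is total and functional from X to Y with respect to M. -/
/-- A conjunction `A₁(X₁;Y₁), …, Aₙ(Xₙ;Yₙ)` of total functional atoms, with the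
disjointness conditions of the paper, is itself total and functional from
`X = (⋃ Xᵢ) \ (⋃ Yᵢ)` to `Y = ⋃ Yᵢ`. Atoms are predicates on valuations
`σ : Var → U`; `A i` depends only on the variables `X i ∪ Y i`. -/
theorem conjunction_total_functional {Var U : Type*} {n : ℕ}
    (X Y : Fin n → Set Var) (A : Fin n → (Var → U) → Prop)
    -- each Aᵢ depends only on its variables Xᵢ ∪ Yᵢ
    (hdep : ∀ i, ∀ σ τ : Var → U, (∀ v ∈ X i ∪ Y i, σ v = τ v) → (A i σ ↔ A i τ))
    -- each Aᵢ is functional from Xᵢ to Yᵢ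
    (hfunc : ∀ i, ∀ σ τ : Var → U, A i σ → A i τ →
        (∀ v ∈ X i, σ v = τ v) → ∀ v ∈ Y i, σ v = τ v)
    -- each Aᵢ is total from Xᵢ to Yᵢ
    (htotal : ∀ i, ∀ σ : Var → U, ∃ τ, (∀ v ∉ Y i, τ v = σ v) ∧ A i τ)
    -- Yᵢ is disjoint from X₁ ∪ … ∪ Xᵢ and from Y₁ ∪ … ∪ Y_{i-1}
    (hdisjX : ∀ i : Fin n, Disjoint (Y i) (⋃ j ≤ i, X j))
    (hdisjY : ∀ i : Fin n, Disjoint (Y i) (⋃ j < i, Y j)) :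
    -- the conjunction F = A₁ ∧ … ∧ Aₙ is functional from X to Y ...
    (∀ σ τ : Var → U, (∀ i, A i σ) → (∀ i, A i τ) →
        (∀ v ∈ (⋃ i, X i) \ (⋃ i, Y i), σ v = τ v) → ∀ v ∈ ⋃ i, Y i, σ v = τ v) ∧
    -- ... and total from X to Y
    (∀ σ : Var → U, ∃ τ, (∀ v ∉ ⋃ i, Y i, τ v = σ v) ∧ ∀ i, A i τ) := by
  constructor
  · -- functionality
    intro σ τ hσ hτ hXY
    -- strong induction on i
    have key : ∀ m : ℕ, ∀ i : Fin n, (i : ℕ) < m → ∀ v ∈ Y i, σ v = τ v := by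
      intro m
      induction m with
      | zero => exact fun i h => absurd h (Nat.not_lt_zero _)
      | succ m IH =>
        intro i _ v hv
        refine hfunc i σ τ (hσ i) (hτ i) ?_ v hv
        intro w hw
        by_cases hwY : w ∈ ⋃ k, Y k
        · obtain ⟨_, ⟨j, rfl⟩, hwj⟩ := hwY
          have hji : j < i := by
            by_contra h
            push_neg at h
            exact (hdisjX j).le_bot ⟨hwj, Set.mem_biUnion h hw⟩
          exact IH j (lt_of_lt_of_le hji (Nat.lt_succ_iff.1 ‹(i:ℕ) < m + 1›)) w hwj
        · exact hXY w ⟨Set.mem_iUnion.2 ⟨i, hw⟩, hwY⟩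
    intro v hv
    obtain ⟨_, ⟨i, rfl⟩, hvi⟩ := hv
    exact key n i i.isLt v hvi
  · -- totality
    intro σ
    have main : ∀ m : ℕ, ∃ τ : Var → U,
        (∀ v ∉ ⋃ i, Y i, τ v = σ v) ∧ ∀ i : Fin n, (i : ℕ) < m → A i τ := by
      intro m
      induction m with
      | zero => exact ⟨σ, fun _ _ => rfl, fun i h => absurd h (Nat.not_lt_zero _)⟩
      | succ m IH =>
        obtain ⟨τ, hτσ, hτA⟩ := IH
        by_cases hm : m < n
        · set i : Fin n := ⟨m, hm⟩
          obtain ⟨τ', hτ'τ, hτ'A⟩ := htotal i τ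
          refine ⟨τ', ?_, ?_⟩
          · intro v hv
            have hvYi : v ∉ Y i := fun h => hv (Set.mem_iUnion.2 ⟨i, h⟩)
            rw [hτ'τ v hvYi, hτσ v hv]
          · intro j hj
            rcases Nat.lt_succ_iff_lt_or_eq.1 hj with hj | hj
            · -- A j τ', since τ' agrees with τ on X j ∪ Y j
              refine (hdep j τ τ' ?_).1 (hτA j hj)
              intro w hw
              have hwYi : w ∉ Y i := by
                intro hwi
                rcases hw with hw | hw
                · have : (j : Fin n) ≤ i := le_of_lt (by exact hj)
                  exact (hdisjX i).le_bot ⟨hwi, Set.mem_biUnion this hw⟩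
                · have : (j : Fin n) < i := hj
                  exact (hdisjY i).le_bot ⟨hwi, Set.mem_biUnion this hw⟩
              exact (hτ'τ w hwYi).symm
            · have : j = i := Fin.ext hj
              rw [this]; exact hτ'A
        · refine ⟨τ, hτσ, fun j hj => hτA j ?_⟩
          exact lt_of_lt_of_le j.isLt (Nat.not_lt.1 hm)
    obtain ⟨τ, h1, h2⟩ := main n
    exact ⟨τ, h1, fun i => h2 i i.isLt⟩
end
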